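/- arXiv:math/0408434 — 3 statements merged into one kernel-verified Lean document; each statement's English description precedes it below -/
import Mathlib

section
/- The 16 products e_u(i,j)·e_v(k,l), for i,j,k,l ∈ {1,2}, form a linear basis of M_4(ℂ), and there is a bijection between {e_u(i,j)e_v(k,l)} and the standard matrix units {e_4(α,β) : 1 ≤ α,β ≤ 4} of M_4(ℂ). -/
open Matrix

noncomputable section

/-- Identification `M₂(ℂ) ⊗ M₂(ℂ) ≅ M₄(ℂ)`: the Kronecker (block) tensor product,
with index `(i₁,i₂) ↦ 2·i₁+i₂`. -/
def tens (a b : Matrix (Fin 2) (Fin 2) ℂ) : Matrix (Fin 4) (Fin 4) ℂ :=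
  Matrix.reindex finProdFinEquiv finProdFinEquiv (Matrix.kroneckerMap (· * ·) a b)

/-- The permutation matrix with 1's at positions (1,1),(2,4),(3,3),(4,2). -/
def uMat : Matrix (Fin 4) (Fin 4) ℂ := !![1,0,0,0; 0,0,0,1; 0,0,1,0; 0,1,0,0]

/-- The permutation matrix with 1's at positions (1,1),(2,2),(3,4),(4,3). -/
def vMat : Matrix (Fin 4) (Fin 4) ℂ := !![1,0,0,0; 0,1,0,0; 0,0,0,1; 0,0,1,0]

/-- `e_u(i,j) = u (e(i,j) ⊗ I₂) u`. -/
def eU (i j : Fin 2) : Matrix (Fin 4) (Fin 4) ℂ :=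
  uMat * tens (Matrix.single i j 1) 1 * uMat

/-- `e_v(i,j) = v (e(i,j) ⊗ I₂) v`. -/
def eV (i j : Fin 2) : Matrix (Fin 4) (Fin 4) ℂ :=
  vMat * tens (Matrix.single i j 1) 1 * vMat

/-- `e_0(i,j) = I₂ ⊗ e(i,j)`. -/
def e0 (i j : Fin 2) : Matrix (Fin 4) (Fin 4) ℂ :=
  tens 1 (Matrix.single i j 1)

end

/-!
`u` and `v` are the permutation matrices of the transpositions `(2 4)` and `(3 4)`, so
`e_u(i,j) = ∑ᵣ E(σ(i,r), σ(j,r))` and `e_v(k,l) = ∑ₛ E(τ(k,s), τ(l,s))`, where `σ`, `τ` are the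
block index `(i,r) ↦ 2i + r` followed by the respective transposition. The blocks
`σ({j} × Fin 2)` and `τ({k} × Fin 2)` meet in exactly one point, at `r = j + k`, `s = j`, so
`e_u(i,j) e_v(k,l)` is the single matrix unit `E(σ(i, j+k), τ(l, j))`. The index map
`(i,j,k,l) ↦ (σ(i, j+k), τ(l, j))` is invertible, hence the products are a relabelling of the
standard basis of `M₄(ℂ)`.
-/

open scoped Kronecker

namespace Matrix

variable {l m n p ι κ R : Type*}

theorem kronecker_sum [Fintype ι] [NonUnitalNonAssocSemiring R] (A : Matrix l m R)
    (B : ι → Matrix n p R) : A ⊗ₖ ∑ r, B r = ∑ r, A ⊗ₖ B r := by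
  ext ⟨a, b⟩ ⟨c, d⟩
  simp [sum_apply, Finset.mul_sum]

variable [DecidableEq m] [DecidableEq n]

theorem kronecker_single_one [Fintype n] [Semiring R] (i j : m) :
    single i j (1 : R) ⊗ₖ (1 : Matrix n n R) = ∑ r, single (i, r) (j, r) 1 := by
  simp [← sum_single_one, kronecker_sum, single_kronecker_single]

theorem swap_mul_single_mul_swap [Fintype n] [Semiring R] (i j a b : n) (c : R) :
    swap R i j * single a b c * swap R i j =
      single (Equiv.swap i j a) (Equiv.swap i j b) c := by
  simp [swap, PEquiv.toMatrix_toPEquiv_mul, PEquiv.mul_toMatrix_toPEquiv]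

theorem sum_single_mul_sum_single_of_unique [Fintype m] [Fintype ι] [Fintype κ] [Semiring R]
    {a b : ι → m} {c d : κ → m} {r₀ : ι} {s₀ : κ} (h : ∀ r s, b r = c s ↔ r = r₀ ∧ s = s₀) :
    (∑ r, single (a r) (b r) (1 : R)) * ∑ s, single (c s) (d s) 1 = single (a r₀) (d s₀) 1 := by
  have hne : ∀ r s, ¬(r = r₀ ∧ s = s₀) → single (a r) (b r) (1 : R) * single (c s) (d s) 1 = 0 :=
    fun r s hrs => single_mul_single_of_ne _ _ _ _ (mt (h r s).1 hrs) _
  rw [Finset.sum_mul_sum,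
    Fintype.sum_eq_single r₀ fun r hr => Finset.sum_eq_zero fun s _ => hne r s (hr ∘ And.left),
    Fintype.sum_eq_single s₀ fun s hs => hne r₀ s (hs ∘ And.right), (h r₀ s₀).2 ⟨rfl, rfl⟩,
    single_mul_single_same, one_mul]

theorem coe_stdBasis_reindex [Fintype m] [Fintype n] [Semiring R] (e : ι ≃ m × n) :
    ⇑((stdBasis R m n).reindex e.symm) = fun p => single (e p).1 (e p).2 1 := by
  funext p
  rw [Module.Basis.reindex_apply, Equiv.symm_symm]
  exact stdBasis_eq_single R (e p).1 (e p).2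

end Matrix

theorem tens_single_one (i j : Fin 2) :
    tens (single i j 1) 1 =
      ∑ r : Fin 2, single (finProdFinEquiv (i, r) : Fin 4) (finProdFinEquiv (j, r)) (1 : ℂ) := by
  change reindexAddEquiv ℂ finProdFinEquiv finProdFinEquiv (single i j 1 ⊗ₖ 1) = _
  simp only [kronecker_single_one, map_sum, coe_reindexAddEquiv, reindex_apply,
    submatrix_single_equiv, Equiv.symm_symm]

theorem swap_mul_tens_single_one_mul_swap (a b : Fin 4) (i j : Fin 2) :
    swap ℂ a b * tens (single i j 1) 1 * swap ℂ a b =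
      ∑ r : Fin 2, single (Equiv.swap a b (finProdFinEquiv (i, r)))
        (Equiv.swap a b (finProdFinEquiv (j, r))) (1 : ℂ) := by
  simp only [tens_single_one, Finset.mul_sum, Finset.sum_mul, swap_mul_single_mul_swap]

theorem uMat_eq_swap : uMat = swap ℂ 1 3 := by
  ext a b; fin_cases a <;> fin_cases b <;> rfl

theorem vMat_eq_swap : vMat = swap ℂ 2 3 := by
  ext a b; fin_cases a <;> fin_cases b <;> rfl

def uIndex : Fin 2 × Fin 2 ≃ Fin 4 := finProdFinEquiv.trans (Equiv.swap 1 3)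

def vIndex : Fin 2 × Fin 2 ≃ Fin 4 := finProdFinEquiv.trans (Equiv.swap 2 3)

theorem eU_eq_sum (i j : Fin 2) : eU i j = ∑ r, single (uIndex (i, r)) (uIndex (j, r)) 1 := by
  rw [eU, uMat_eq_swap]
  exact swap_mul_tens_single_one_mul_swap 1 3 i j

theorem eV_eq_sum (k l : Fin 2) : eV k l = ∑ s, single (vIndex (k, s)) (vIndex (l, s)) 1 := by
  rw [eV, vMat_eq_swap]
  exact swap_mul_tens_single_one_mul_swap 2 3 k l

theorem uIndex_eq_vIndex_iff (j k r s : Fin 2) :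
    uIndex (j, r) = vIndex (k, s) ↔ r = j + k ∧ s = j := by
  revert j k r s
  decide

theorem eU_mul_eV (i j k l : Fin 2) :
    eU i j * eV k l = single (uIndex (i, j + k)) (vIndex (l, j)) 1 := by
  rw [eU_eq_sum, eV_eq_sum]
  exact sum_single_mul_sum_single_of_unique (uIndex_eq_vIndex_iff j k)

def eUeVIndexEquiv : (Fin 2 × Fin 2) × Fin 2 × Fin 2 ≃ Fin 4 × Fin 4 where
  toFun p := (uIndex (p.1.1, p.1.2 + p.2.1), vIndex (p.2.2, p.1.2))
  invFun q :=
    (((uIndex.symm q.1).1, (vIndex.symm q.2).2),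
      ((uIndex.symm q.1).2 - (vIndex.symm q.2).2, (vIndex.symm q.2).1))
  left_inv p := by simp
  right_inv q := by simp

/-- The 16 products `e_u(i,j)·e_v(k,l)` form a linear basis of `M₄(ℂ)`, and they
are in bijection with the standard matrix units `e₄(α,β)` of `M₄(ℂ)`. -/
theorem stmt7 :
    LinearIndependent ℂ (fun p : (Fin 2 × Fin 2) × Fin 2 × Fin 2 =>
      eU p.1.1 p.1.2 * eV p.2.1 p.2.2) ∧
    Submodule.span ℂ (Set.range fun p : (Fin 2 × Fin 2) × Fin 2 × Fin 2 =>
      eU p.1.1 p.1.2 * eV p.2.1 p.2.2) = ⊤ ∧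
    ∃ f : ((Fin 2 × Fin 2) × Fin 2 × Fin 2) ≃ Fin 4 × Fin 4,
      ∀ p : (Fin 2 × Fin 2) × Fin 2 × Fin 2,
        eU p.1.1 p.1.2 * eV p.2.1 p.2.2 = Matrix.single (f p).1 (f p).2 1 := by
  have hbasis : (fun p : (Fin 2 × Fin 2) × Fin 2 × Fin 2 => eU p.1.1 p.1.2 * eV p.2.1 p.2.2) =
      (stdBasis ℂ (Fin 4) (Fin 4)).reindex eUeVIndexEquiv.symm := by
    rw [coe_stdBasis_reindex]
    exact funext fun p => eU_mul_eV _ _ _ _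
  exact ⟨hbasis ▸ Module.Basis.linearIndependent _, hbasis ▸ Module.Basis.span_eq _,
    eUeVIndexEquiv, fun p => eU_mul_eV _ _ _ _⟩
end

section
/- Setting e_v(i,j) = v(e(i,j)⊗I₂)v and e_u(k,l) = u(e(k,l)⊗I₂)u in M_4(ℂ), the relation e_v(i,j)·e_u(k,l) = e_u(k,l)·e_v(σ(i),σ(j)) holds for all i,j,k,l ∈ {1,2} with k ≠ l, where σ swaps 1 and 2. -/
open Matrix

/-! With 0-based indices, `u` and `v` are the permutation matrices of the transpositions
`(1 3)` and `(2 3)` of `Fin 4`, so every matrix in the relation is a 0/1 matrix: the image under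
the cast `ℕ → R` of the same construction over `ℕ`. Over `ℕ` matrix equality is decidable, so
the relation is a finite computation checked by the kernel, and it transfers along the cast to
every semiring. -/

open Equiv

section

variable {R : Type*} [Semiring R]

variable (R) in
def permConjSingleKronOne (π : Perm (Fin 4)) (i j : Fin 2) : Matrix (Fin 4) (Fin 4) R :=
  π.permMatrix R *
    reindex finProdFinEquiv finProdFinEquiv
      (kroneckerMap (· * ·) (single i j 1) (1 : Matrix (Fin 2) (Fin 2) R)) *
    π.permMatrix R

theorem map_permConjSingleKronOne {S : Type*} [Semiring S] (f : R →+* S)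
    (π : Perm (Fin 4)) (i j : Fin 2) :
    (permConjSingleKronOne R π i j).map f = permConjSingleKronOne S π i j := by
  simp only [permConjSingleKronOne, Matrix.map_mul, PEquiv.map_toMatrix]
  congr 2
  ext r c
  simp [single_apply, one_apply, apply_ite f]

theorem permConjSingleKronOne_swap_relation_nat :
    ∀ i j k l : Fin 2, k ≠ l →
      permConjSingleKronOne ℕ (swap 2 3) i j * permConjSingleKronOne ℕ (swap 1 3) k l =
        permConjSingleKronOne ℕ (swap 1 3) k l *
          permConjSingleKronOne ℕ (swap 2 3) (swap 0 1 i) (swap 0 1 j) := by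
  decide +kernel

variable (R) in
theorem permConjSingleKronOne_swap_relation (i j k l : Fin 2) (hkl : k ≠ l) :
    permConjSingleKronOne R (swap 2 3) i j * permConjSingleKronOne R (swap 1 3) k l =
      permConjSingleKronOne R (swap 1 3) k l *
        permConjSingleKronOne R (swap 2 3) (swap 0 1 i) (swap 0 1 j) := by
  have h := congrArg (·.map (Nat.castRingHom R))
    (permConjSingleKronOne_swap_relation_nat i j k l hkl)
  simpa only [Matrix.map_mul, map_permConjSingleKronOne] using h

end

theorem uMat_eq_permMatrix : uMat = (swap 1 3 : Perm (Fin 4)).permMatrix ℂ := by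
  ext r c
  fin_cases r <;> fin_cases c <;> simp [uMat, PEquiv.toMatrix_apply, swap_apply_def]

theorem vMat_eq_permMatrix : vMat = (swap 2 3 : Perm (Fin 4)).permMatrix ℂ := by
  ext r c
  fin_cases r <;> fin_cases c <;> simp [vMat, PEquiv.toMatrix_apply, swap_apply_def]

theorem eU_eq_permConjSingleKronOne (i j : Fin 2) :
    eU i j = permConjSingleKronOne ℂ (swap 1 3) i j := by
  rw [eU, uMat_eq_permMatrix]
  rfl

theorem eV_eq_permConjSingleKronOne (i j : Fin 2) :
    eV i j = permConjSingleKronOne ℂ (swap 2 3) i j := by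
  rw [eV, vMat_eq_permMatrix]
  rfl

/-- The relation `e_v(i,j)·e_u(k,l) = e_u(k,l)·e_v(σ(i),σ(j))` for all
`i,j,k,l ∈ {1,2}` with `k ≠ l`, where `σ` swaps `1` and `2`. -/
theorem stmt16 :
    ∀ i j k l : Fin 2, k ≠ l →
      eV i j * eU k l = eU k l * eV (Equiv.swap 0 1 i) (Equiv.swap 0 1 j) := by
  intro i j k l hkl
  simp only [eU_eq_permConjSingleKronOne, eV_eq_permConjSingleKronOne]
  exact permConjSingleKronOne_swap_relation ℂ i j k l hkl
end

section
/- For the triangle in M_4(ℂ) with edge algebras D_{12} = u(M₂⊗I₂)u, D_{23} = v(M₂⊗I₂)v, D_{13} = I₂⊗M₂, the pairwise intersections satisfy D_{12} ∩ D_{13} = ℂ·I₄ and D_{23} ∩ D_{13} = ℂ·I₄. -/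
/-!
Conjugation by `u` or `v` only permutes the entries of `a ⊗ I₂`, while `I₂ ⊗ b` is block
diagonal. Comparing the two shapes entrywise forces the off-diagonal entries of `a` to vanish
and its diagonal entries to agree, so `a` is scalar, and then so is `u (a ⊗ I₂) u` since
`u² = 1`. Conversely every scalar lies in both algebras, again because `u² = v² = 1`.
-/

open Matrix

lemma tens_smul_one_one (c : ℂ) : tens (c • 1) 1 = c • (1 : Matrix (Fin 4) (Fin 4) ℂ) := by
  rw [tens, smul_kronecker, one_kronecker_one, reindex_apply, submatrix_smul, Pi.smul_apply,
    Pi.smul_apply, submatrix_one_equiv]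

lemma tens_one_smul_one (c : ℂ) : tens 1 (c • 1) = c • (1 : Matrix (Fin 4) (Fin 4) ℂ) := by
  rw [tens, kronecker_smul, one_kronecker_one, reindex_apply, submatrix_smul, Pi.smul_apply,
    Pi.smul_apply, submatrix_one_equiv]

lemma tens_eq (a b : Matrix (Fin 2) (Fin 2) ℂ) :
    tens a b = !![a 0 0 * b 0 0, a 0 0 * b 0 1, a 0 1 * b 0 0, a 0 1 * b 0 1;
                  a 0 0 * b 1 0, a 0 0 * b 1 1, a 0 1 * b 1 0, a 0 1 * b 1 1;
                  a 1 0 * b 0 0, a 1 0 * b 0 1, a 1 1 * b 0 0, a 1 1 * b 0 1;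
                  a 1 0 * b 1 0, a 1 0 * b 1 1, a 1 1 * b 1 0, a 1 1 * b 1 1] := by
  ext i j
  fin_cases i <;> fin_cases j <;>
    simp [tens, reindex_apply, kroneckerMap_apply, finProdFinEquiv] <;> rfl

lemma tens_one_left (b : Matrix (Fin 2) (Fin 2) ℂ) :
    tens 1 b = !![b 0 0, b 0 1, 0, 0;
                  b 1 0, b 1 1, 0, 0;
                  0, 0, b 0 0, b 0 1;
                  0, 0, b 1 0, b 1 1] := by
  rw [tens_eq]
  ext i j
  fin_cases i <;> fin_cases j <;> simp

lemma uMat_mul_self : uMat * uMat = 1 := by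
  ext i j
  fin_cases i <;> fin_cases j <;> simp [uMat, mul_apply, Fin.sum_univ_four, one_apply]

lemma vMat_mul_self : vMat * vMat = 1 := by
  ext i j
  fin_cases i <;> fin_cases j <;> simp [vMat, mul_apply, Fin.sum_univ_four, one_apply]

lemma uMat_mul_tens_one_mul_uMat (a : Matrix (Fin 2) (Fin 2) ℂ) :
    uMat * tens a 1 * uMat = !![a 0 0, 0, a 0 1, 0;
                                0, a 1 1, 0, a 1 0;
                                a 1 0, 0, a 1 1, 0;
                                0, a 0 1, 0, a 0 0] := by
  rw [tens_eq]
  ext i j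
  fin_cases i <;> fin_cases j <;> simp [uMat, one_apply, mul_apply, Fin.sum_univ_four]

lemma vMat_mul_tens_one_mul_vMat (a : Matrix (Fin 2) (Fin 2) ℂ) :
    vMat * tens a 1 * vMat = !![a 0 0, 0, 0, a 0 1;
                                0, a 0 0, a 0 1, 0;
                                0, a 1 0, a 1 1, 0;
                                a 1 0, 0, 0, a 1 1] := by
  rw [tens_eq]
  ext i j
  fin_cases i <;> fin_cases j <;> simp [vMat, one_apply, mul_apply, Fin.sum_univ_four]

lemma Matrix.eq_smul_one_of_fin_two {R : Type*} [Semiring R] (a : Matrix (Fin 2) (Fin 2) R)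
    (h01 : a 0 1 = 0) (h10 : a 1 0 = 0) (h11 : a 1 1 = a 0 0) : a = a 0 0 • 1 := by
  ext i j
  fin_cases i <;> fin_cases j <;> simp [h01, h10, h11]

lemma eq_smul_one_of_uMat_conj_eq_tens_one {a b : Matrix (Fin 2) (Fin 2) ℂ}
    (h : uMat * tens a 1 * uMat = tens 1 b) : a = a 0 0 • 1 := by
  rw [uMat_mul_tens_one_mul_uMat, tens_one_left] at h
  have entry := fun i j => congrFun (congrFun h i) j
  have h00 : a 0 0 = b 0 0 := by simpa using entry 0 0
  have h02 : a 0 1 = 0 := by simpa using entry 0 2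
  have h20 : a 1 0 = 0 := by simpa using entry 2 0
  have h22 : a 1 1 = b 0 0 := by simpa using entry 2 2
  exact a.eq_smul_one_of_fin_two h02 h20 (h22.trans h00.symm)

lemma eq_smul_one_of_vMat_conj_eq_tens_one {a b : Matrix (Fin 2) (Fin 2) ℂ}
    (h : vMat * tens a 1 * vMat = tens 1 b) : a = a 0 0 • 1 := by
  rw [vMat_mul_tens_one_mul_vMat, tens_one_left] at h
  have entry := fun i j => congrFun (congrFun h i) j
  have h00 : a 0 0 = b 0 0 := by simpa using entry 0 0
  have h03 : a 0 1 = 0 := by simpa using entry 0 3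
  have h30 : a 1 0 = 0 := by simpa using entry 3 0
  have h22 : a 1 1 = b 0 0 := by simpa using entry 2 2
  exact a.eq_smul_one_of_fin_two h03 h30 (h22.trans h00.symm)

theorem conj_tens_one_inter_tens_one_eq_scalars {P : Matrix (Fin 4) (Fin 4) ℂ} (hP : P * P = 1)
    (hscalar : ∀ a b, P * tens a 1 * P = tens 1 b → a = a 0 0 • 1) :
    {x | ∃ a, x = P * tens a 1 * P} ∩ {x | ∃ b, x = tens 1 b} = {x | ∃ c : ℂ, x = c • 1} := by
  have conj_scalar (c : ℂ) : P * tens (c • 1) 1 * P = c • 1 := by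
    rw [tens_smul_one_one, Matrix.mul_smul, mul_one, Matrix.smul_mul, hP]
  ext x
  constructor
  · rintro ⟨⟨a, rfl⟩, b, hb⟩
    exact ⟨a 0 0, (congrArg (fun a => P * tens a 1 * P) (hscalar a b hb)).trans (conj_scalar _)⟩
  · rintro ⟨c, rfl⟩
    exact ⟨⟨c • 1, (conj_scalar c).symm⟩, c • 1, (tens_one_smul_one c).symm⟩

/-- For the triangle in `M₄(ℂ)` with edge algebras `D₁₂ = u(M₂⊗I₂)u`,
`D₂₃ = v(M₂⊗I₂)v`, `D₁₃ = I₂⊗M₂`, one has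
`D₁₂ ∩ D₁₃ = ℂ·I₄` and `D₂₃ ∩ D₁₃ = ℂ·I₄`. -/
theorem stmt19 :
    ({x : Matrix (Fin 4) (Fin 4) ℂ | ∃ a : Matrix (Fin 2) (Fin 2) ℂ, x = uMat * tens a 1 * uMat} ∩
        {x : Matrix (Fin 4) (Fin 4) ℂ | ∃ b : Matrix (Fin 2) (Fin 2) ℂ, x = tens 1 b}
      = {x : Matrix (Fin 4) (Fin 4) ℂ | ∃ c : ℂ, x = c • (1 : Matrix (Fin 4) (Fin 4) ℂ)}) ∧
    ({x : Matrix (Fin 4) (Fin 4) ℂ | ∃ a : Matrix (Fin 2) (Fin 2) ℂ, x = vMat * tens a 1 * vMat} ∩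
        {x : Matrix (Fin 4) (Fin 4) ℂ | ∃ b : Matrix (Fin 2) (Fin 2) ℂ, x = tens 1 b}
      = {x : Matrix (Fin 4) (Fin 4) ℂ | ∃ c : ℂ, x = c • (1 : Matrix (Fin 4) (Fin 4) ℂ)}) :=
  ⟨conj_tens_one_inter_tens_one_eq_scalars uMat_mul_self
      fun _ _ => eq_smul_one_of_uMat_conj_eq_tens_one,
    conj_tens_one_inter_tens_one_eq_scalars vMat_mul_self
      fun _ _ => eq_smul_one_of_vMat_conj_eq_tens_one⟩
end
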